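/- For every integer m ≥ 1 there exists a constant β_m > 0 such that for all integers n ≥ 0, φ³_{n,m} ≤ β_m · (n+1)^{-5/2} · (256/27)^n. -/

import Mathlib

/-- The number of rooted type III triangulations of a disc with m+2 boundary
vertices and n internal vertices (for m ≥ 1). -/
noncomputable def phi3 (n m : ℕ) : ℝ :=
  (2 * Nat.factorial (2 * m + 1) * Nat.factorial (4 * n + 2 * m - 1) : ℝ) /
    (Nat.factorial (m - 1) * Nat.factorial (m + 1) * Nat.factorial n *
      Nat.factorial (3 * n + 2 * m + 1))

/-! Write `φ³_{n,k+1} = c_k (4n+2k+1)! / (n! (3n+2k+3)!)`. Passing to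
`(4n)! / (n! (3n)!) = C(4n, n)` costs a factor `O((n+1)⁻²)`: the `2k+1` extra factors upstairs
are each `O(n+1)`, the `2k+3` extra factors downstairs are each at least `n+1`. Stirling's bounds
`√(2πn) (n/e)ⁿ ≤ n! ≤ e √n (n/e)ⁿ` then give `C(4n, n) ≤ (256/27)ⁿ / √(n+1)`. -/

open Nat Real

theorem factorial_le_exp_one_mul_sqrt_mul_pow {n : ℕ} (hn : n ≠ 0) :
    (n ! : ℝ) ≤ exp 1 * √n * (n / exp 1) ^ n := by
  have hle : Stirling.stirlingSeq n ≤ exp 1 / √2 := by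
    obtain ⟨n, rfl⟩ := Nat.exists_eq_succ_of_ne_zero hn
    simpa using Stirling.stirlingSeq'_antitone (Nat.zero_le n)
  have hpos : 0 < √(2 * n : ℝ) * (n / exp 1) ^ n := by
    have : (0 : ℝ) < n := by exact_mod_cast Nat.pos_of_ne_zero hn
    positivity
  rw [Stirling.stirlingSeq, div_le_iff₀ hpos] at hle
  calc (n ! : ℝ) ≤ exp 1 / √2 * (√(2 * n : ℝ) * (n / exp 1) ^ n) := hle
    _ = exp 1 * √n * (n / exp 1) ^ n := by
      rw [sqrt_mul (by norm_num)]
      field_simp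

theorem choose_add_le_stirling {a b : ℕ} (ha : a ≠ 0) (hb : b ≠ 0) :
    ((a + b).choose a : ℝ) ≤
      exp 1 / (2 * π) * √((a + b) / (a * b)) * ((a + b) ^ (a + b) / (a ^ a * b ^ b)) := by
  have hfac : ((a + b).choose a : ℝ) = (a + b)! / (a ! * b !) := by
    rw [Nat.choose_eq_factorial_div_factorial (by omega), Nat.add_sub_cancel_left,
      Nat.cast_div (Nat.factorial_mul_factorial_dvd_factorial_add a b) (by positivity)]
    push_cast; rfl
  have hnum := factorial_le_exp_one_mul_sqrt_mul_pow (n := a + b) (by omega)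
  have ha' : (0 : ℝ) < a := by exact_mod_cast Nat.pos_of_ne_zero ha
  have hb' : (0 : ℝ) < b := by exact_mod_cast Nat.pos_of_ne_zero hb
  rw [hfac, div_le_iff₀ (by positivity)]
  calc ((a + b)! : ℝ)
      ≤ exp 1 * √((a + b : ℕ) : ℝ) * (((a + b : ℕ) : ℝ) / exp 1) ^ (a + b) := hnum
    _ = exp 1 / (2 * π) * √((a + b) / (a * b)) * ((a + b) ^ (a + b) / (a ^ a * b ^ b)) *
          ((√(2 * π * a) * (a / exp 1) ^ a) * (√(2 * π * b) * (b / exp 1) ^ b)) := by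
      have hsq : √(2 * π * a) * √(2 * π * b) = 2 * π * √(a * b) := by
        rw [← sqrt_mul (by positivity),
          show 2 * π * a * (2 * π * b) = (2 * π) ^ 2 * (a * b) by ring,
          sqrt_mul (by positivity), sqrt_sq (by positivity)]
      rw [sqrt_div' _ (by positivity), div_pow, div_pow, div_pow]
      push_cast
      generalize √(2 * π * a) = sA, √(2 * π * b) = sB at hsq ⊢
      field_simp
      linear_combination (-exp 1 ^ (a + b)) * hsq
    _ ≤ _ := by gcongr <;> exact Stirling.le_factorial_stirling _

theorem choose_four_mul_mul_sqrt_le (n : ℕ) :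
    ((4 * n).choose n : ℝ) * √(n + 1) ≤ (256 / 27) ^ n := by
  rcases eq_or_ne n 0 with rfl | hn
  · simp
  have hn' : (1 : ℝ) ≤ n := by exact_mod_cast Nat.one_le_iff_ne_zero.mpr hn
  have hchoose := choose_add_le_stirling hn (b := 3 * n) (by omega)
  rw [show n + 3 * n = 4 * n by ring] at hchoose
  push_cast at hchoose
  have hpow :
      ((n : ℝ) + 3 * n) ^ (4 * n) / ((n : ℝ) ^ n * (3 * n) ^ (3 * n)) = (256 / 27) ^ n := by
    rw [show (256 / 27 : ℝ) ^ n = 4 ^ (4 * n) / 3 ^ (3 * n) by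
      rw [pow_mul, pow_mul, ← div_pow]; norm_num]
    field_simp
    ring
  have hsqrt : √(((n : ℝ) + 3 * n) / (n * (3 * n))) * √(n + 1) ≤ 2 := by
    rw [← sqrt_mul (by positivity), show (2 : ℝ) = √4 by norm_num]
    apply Real.sqrt_le_sqrt
    rw [div_mul_eq_mul_div, div_le_iff₀ (by positivity)]
    nlinarith
  have hconst : exp 1 / (2 * π) * 2 ≤ 1 := by
    rw [div_mul_eq_mul_div, div_le_one (by positivity)]
    nlinarith [exp_one_lt_three, pi_gt_three]
  calc ((4 * n).choose n : ℝ) * √(n + 1)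
      ≤ exp 1 / (2 * π) * √((n + 3 * n) / (n * (3 * n))) *
          ((n + 3 * n) ^ (4 * n) / (n ^ n * (3 * n) ^ (3 * n))) * √(n + 1) := by gcongr
    _ = exp 1 / (2 * π) * (√((n + 3 * n) / (n * (3 * n))) * √(n + 1)) * (256 / 27) ^ n := by
      rw [hpow]; ring
    _ ≤ exp 1 / (2 * π) * 2 * (256 / 27) ^ n := by gcongr
    _ ≤ (256 / 27) ^ n := by nlinarith [pow_pos (show (0 : ℝ) < 256 / 27 by norm_num) n]

theorem factorial_add_le_factorial_mul_pow (m n : ℕ) : (m + n)! ≤ m ! * (m + n) ^ n := by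
  rw [← factorial_mul_ascFactorial]
  exact Nat.mul_le_mul_left _ (ascFactorial_le_pow_add m n)

theorem factorial_mul_sq_le_choose_mul (n k : ℕ) :
    (4 * n + 2 * k + 1)! * (n + 1) ^ 2 ≤
      (4 * (k + 1)) ^ (2 * k + 1) * (4 * n).choose n * (n ! * (3 * n + 2 * k + 3)!) := by
  have hnum : (4 * n + 2 * k + 1)! ≤ (4 * n)! * (4 * (k + 1) * (n + 1)) ^ (2 * k + 1) :=
    calc (4 * n + 2 * k + 1)! ≤ (4 * n)! * (4 * n + (2 * k + 1)) ^ (2 * k + 1) :=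
          factorial_add_le_factorial_mul_pow (4 * n) (2 * k + 1)
      _ ≤ (4 * n)! * (4 * (k + 1) * (n + 1)) ^ (2 * k + 1) := by gcongr; nlinarith
  have hden : (3 * n)! * (n + 1) ^ (2 * k + 3) ≤ (3 * n + 2 * k + 3)! :=
    calc (3 * n)! * (n + 1) ^ (2 * k + 3) ≤ (3 * n)! * (3 * n + 1) ^ (2 * k + 3) := by
          gcongr; omega
      _ ≤ (3 * n + 2 * k + 3)! := factorial_mul_pow_le_factorial
  have hchoose : (4 * n).choose n * n ! * (3 * n)! = (4 * n)! := by
    rw [show 3 * n = 4 * n - n by omega]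
    exact choose_mul_factorial_mul_factorial (by omega)
  refine Nat.le_of_mul_le_mul_right ?_ (factorial_pos (3 * n))
  calc (4 * n + 2 * k + 1)! * (n + 1) ^ 2 * (3 * n)!
      ≤ (4 * n)! * (4 * (k + 1) * (n + 1)) ^ (2 * k + 1) * (n + 1) ^ 2 * (3 * n)! := by gcongr
    _ = (4 * (k + 1)) ^ (2 * k + 1) * (4 * n)! * ((3 * n)! * (n + 1) ^ (2 * k + 3)) := by
      rw [mul_pow]; ring
    _ ≤ (4 * (k + 1)) ^ (2 * k + 1) * (4 * n)! * (3 * n + 2 * k + 3)! := by gcongr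
    _ = _ := by rw [← hchoose]; ring

theorem phi3_succ_mul_sq_le (n k : ℕ) :
    phi3 n (k + 1) * (n + 1) ^ 2 ≤
      2 * (2 * k + 3)! / (k ! * (k + 2)!) * (4 * (k + 1)) ^ (2 * k + 1) * (4 * n).choose n := by
  have h : ((4 * n + 2 * k + 1)! * (n + 1) ^ 2 : ℝ) ≤
      (4 * (k + 1)) ^ (2 * k + 1) * (4 * n).choose n * (n ! * (3 * n + 2 * k + 3)!) := by
    exact_mod_cast factorial_mul_sq_le_choose_mul n k
  have hphi : phi3 n (k + 1) = 2 * (2 * k + 3)! / (k ! * (k + 2)!) *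
      ((4 * n + 2 * k + 1)! / (n ! * (3 * n + 2 * k + 3)!)) := by
    unfold phi3
    rw [show 4 * n + 2 * (k + 1) - 1 = 4 * n + 2 * k + 1 by omega,
      show 3 * n + 2 * (k + 1) + 1 = 3 * n + 2 * k + 3 by omega]
    simp only [add_tsub_cancel_right]
    field_simp
    ring_nf
  calc phi3 n (k + 1) * (n + 1) ^ 2
      = (2 * (2 * k + 3)! / (k ! * (k + 2)!) : ℝ) *
          ((4 * n + 2 * k + 1)! * (n + 1) ^ 2 / (n ! * (3 * n + 2 * k + 3)!)) := by
        rw [hphi]; ring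
    _ ≤ (2 * (2 * k + 3)! / (k ! * (k + 2)!) : ℝ) *
          ((4 * (k + 1)) ^ (2 * k + 1) * (4 * n).choose n) := by
        gcongr
        rw [div_le_iff₀ (by positivity)]
        exact h
    _ = _ := by ring

theorem rpow_neg_five_div_two_eq {x : ℝ} (hx : 0 < x) :
    x ^ (-(5 / 2) : ℝ) = 1 / (x ^ 2 * √x) := by
  rw [rpow_neg hx.le, show (5 / 2 : ℝ) = (2 : ℕ) + 1 / 2 by norm_num, rpow_add hx,
    rpow_natCast, ← sqrt_eq_rpow, one_div]

/-- for m ≥ 1 there is β_m > 0 with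
φ³_{n,m} ≤ β_m (n+1)^{-5/2} (256/27)^n for all n. -/
theorem phi3_upper_bound (m : ℕ) (hm : 1 ≤ m) :
    ∃ β : ℝ, 0 < β ∧ ∀ n : ℕ,
      phi3 n m ≤ β * ((n : ℝ) + 1) ^ (-(5 / 2) : ℝ) * (256 / 27 : ℝ) ^ n := by
  obtain ⟨k, rfl⟩ : ∃ k, m = k + 1 := ⟨m - 1, by omega⟩
  set β : ℝ := 2 * (2 * k + 3)! / (k ! * (k + 2)!) * (4 * (k + 1)) ^ (2 * k + 1)
  refine ⟨β, by positivity, fun n => ?_⟩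
  have hn : (0 : ℝ) < n + 1 := by positivity
  rw [rpow_neg_five_div_two_eq hn, mul_one_div, div_mul_eq_mul_div, le_div_iff₀ (by positivity)]
  calc phi3 n (k + 1) * ((n + 1) ^ 2 * √(n + 1))
      = phi3 n (k + 1) * (n + 1) ^ 2 * √(n + 1) := by ring
    _ ≤ β * (4 * n).choose n * √(n + 1) :=
        mul_le_mul_of_nonneg_right (phi3_succ_mul_sq_le n k) (sqrt_nonneg _)
    _ = β * ((4 * n).choose n * √(n + 1)) := by ring
    _ ≤ β * (256 / 27) ^ n := by gcongr; exact choose_four_mul_mul_sqrt_le n
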